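/- arXiv:2509.04144 — 3 statements merged into one kernel-verified Lean document; each statement's English description precedes it below -/
import Mathlib

section
/- The smallest real root μ_min of the polynomial p(μ) satisfies 0 ≤ μ_min ≤ min(λ_1, q_0), where λ_1 = min_i λ_i. -/
/-!
Multiplying by `(-1)^m` turns `p` into
`f(μ) = (μ - q₀) ∏ᵢ (λᵢ - μ) + μ ∑ᵢ qᵢ ∏_{j ≠ i} (λⱼ - μ)`.
For `μ < 0` both summands are nonpositive and the first is negative, so `p` has no negative root;
`f(0) ≤ 0`, while at `c = min(λ₁, q₀)` the first summand vanishes and the second is nonnegative,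
so the intermediate value theorem gives a root of `p` in `[0, c]`.
-/

/-- The polynomial `p` from Theorem 1 of the paper. -/
noncomputable def pPoly (m : ℕ) (lam q : Fin m → ℝ) (q0 : ℝ) (μ : ℝ) : ℝ :=
  (μ - (q0 + ∑ i, q i)) * ∏ i, (μ - lam i) -
    ∑ i, lam i * q i * ∏ j ∈ Finset.univ.erase i, (μ - lam j)

open Finset

section
variable {m : ℕ} (lam q : Fin m → ℝ) (q0 : ℝ)

lemma continuous_pPoly : Continuous (pPoly m lam q q0) := by
  unfold pPoly
  fun_prop

lemma neg_one_pow_mul_prod_sub {ι R : Type*} [CommRing R] (s : Finset ι) (a : ι → R) (x : R) :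
    (-1) ^ #s * ∏ j ∈ s, (x - a j) = ∏ j ∈ s, (a j - x) := by
  rw [← prod_neg]
  simp only [neg_sub]

lemma neg_one_pow_mul_pPoly (x : ℝ) :
    (-1) ^ m * pPoly m lam q q0 x =
      (x - q0) * ∏ i, (lam i - x) + x * ∑ i, q i * ∏ j ∈ univ.erase i, (lam j - x) := by
  have hprod : (-1) ^ m * ∏ i, (x - lam i) = ∏ i, (lam i - x) := by
    simpa using neg_one_pow_mul_prod_sub univ lam x
  have herase (i : Fin m) :
      (-1) ^ m * ∏ j ∈ univ.erase i, (x - lam j) = -∏ j ∈ univ.erase i, (lam j - x) := by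
    have hpow : (-1 : ℝ) ^ m = (-1) ^ (#(univ.erase i) + 1) := by
      rw [card_erase_add_one (mem_univ i), card_univ, Fintype.card_fin]
    rw [← neg_one_pow_mul_prod_sub, hpow, pow_succ]
    ring
  have hsplit (i : Fin m) :
      ∏ j, (lam j - x) = (lam i - x) * ∏ j ∈ univ.erase i, (lam j - x) :=
    (mul_prod_erase univ (fun j => lam j - x) (mem_univ i)).symm
  calc (-1) ^ m * pPoly m lam q q0 x
      = (x - q0) * ∏ i, (lam i - x) -
          ∑ i, (q i * ∏ j, (lam j - x) - lam i * q i * ∏ j ∈ univ.erase i, (lam j - x)) := by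
        rw [pPoly, mul_sub, mul_left_comm, hprod, mul_sum]
        simp only [mul_left_comm _ (lam _ * q _), herase, mul_neg, sum_neg_distrib, sum_sub_distrib,
          ← sum_mul]
        ring
    _ = _ := by
        rw [mul_sum, sub_eq_add_neg, ← sum_neg_distrib]
        congr 1
        exact sum_congr rfl fun i _ => by rw [hsplit i]; ring

variable {lam q q0}

lemma sum_mul_prod_erase_sub_nonneg (hq : ∀ i, 0 ≤ q i) {x : ℝ} (hx : ∀ i, x ≤ lam i) :
    0 ≤ ∑ i, q i * ∏ j ∈ univ.erase i, (lam j - x) :=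
  sum_nonneg fun i _ => mul_nonneg (hq i) (prod_nonneg fun j _ => sub_nonneg.mpr (hx j))

lemma neg_one_pow_mul_pPoly_nonpos (hlam : ∀ i, 0 ≤ lam i) (hq : ∀ i, 0 ≤ q i) (hq0 : 0 ≤ q0)
    {x : ℝ} (hx : x ≤ 0) : (-1) ^ m * pPoly m lam q q0 x ≤ 0 := by
  have hxlam i : x ≤ lam i := hx.trans (hlam i)
  rw [neg_one_pow_mul_pPoly]
  have hD : 0 ≤ ∏ i, (lam i - x) := prod_nonneg fun i _ => sub_nonneg.mpr (hxlam i)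
  have := mul_nonpos_of_nonpos_of_nonneg (by linarith : x - q0 ≤ 0) hD
  have := mul_nonpos_of_nonpos_of_nonneg hx (sum_mul_prod_erase_sub_nonneg hq hxlam)
  linarith

lemma pPoly_ne_zero_of_neg (hlam : ∀ i, 0 ≤ lam i) (hq : ∀ i, 0 ≤ q i) (hq0 : 0 ≤ q0)
    {x : ℝ} (hx : x < 0) : pPoly m lam q q0 x ≠ 0 := by
  have hxlam i : x ≤ lam i := hx.le.trans (hlam i)
  have hD : 0 < ∏ i, (lam i - x) := prod_pos fun i _ => by linarith [hlam i]
  have := mul_neg_of_neg_of_pos (by linarith : x - q0 < 0) hD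
  have := mul_nonpos_of_nonpos_of_nonneg hx.le (sum_mul_prod_erase_sub_nonneg hq hxlam)
  intro h
  have := neg_one_pow_mul_pPoly lam q q0 x
  rw [h, mul_zero] at this
  linarith

lemma neg_one_pow_mul_pPoly_min_nonneg (hq : ∀ i, 0 ≤ q i) (hq0 : 0 ≤ q0) {i₀ : Fin m}
    (hlam : 0 ≤ lam i₀) (hi₀ : ∀ j, lam i₀ ≤ lam j) :
    0 ≤ (-1) ^ m * pPoly m lam q q0 (min (lam i₀) q0) := by
  have hvanish : (min (lam i₀) q0 - q0) * ∏ i, (lam i - min (lam i₀) q0) = 0 := by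
    rcases min_choice (lam i₀) q0 with h | h <;> rw [h]
    · rw [prod_eq_zero (mem_univ i₀) (sub_self _), mul_zero]
    · rw [sub_self, zero_mul]
  rw [neg_one_pow_mul_pPoly, hvanish, zero_add]
  exact mul_nonneg (le_min hlam hq0)
    (sum_mul_prod_erase_sub_nonneg hq fun j => (min_le_left _ _).trans (hi₀ j))

lemma exists_pPoly_eq_zero_mem_Icc (hlam : ∀ i, 0 ≤ lam i) (hq : ∀ i, 0 ≤ q i) (hq0 : 0 ≤ q0)
    {i₀ : Fin m} (hi₀ : ∀ j, lam i₀ ≤ lam j) :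
    ∃ y ∈ Set.Icc 0 (min (lam i₀) q0), pPoly m lam q q0 y = 0 := by
  obtain ⟨y, hy, hfy⟩ := intermediate_value_Icc (le_min (hlam i₀) hq0)
    (continuous_const.mul (continuous_pPoly lam q q0)).continuousOn
    ⟨neg_one_pow_mul_pPoly_nonpos hlam hq hq0 le_rfl,
      neg_one_pow_mul_pPoly_min_nonneg hq hq0 (hlam i₀) hi₀⟩
  exact ⟨y, hy, (mul_eq_zero.mp hfy).resolve_left (pow_ne_zero _ (by norm_num))⟩

end

/-- The smallest real root `μ_min` of `p` satisfies `0 ≤ μ_min ≤ min(λ₁, q₀)`. -/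
theorem mu_min_bounds (m : ℕ) (hm : 0 < m) (lam q : Fin m → ℝ) (q0 : ℝ)
    (hlam : ∀ i, 0 < lam i) (hsorted : Monotone lam)
    (hq : ∀ i, 0 < q i) (hq0 : 0 < q0)
    (μmin : ℝ) (hroot : pPoly m lam q q0 μmin = 0)
    (hsmallest : ∀ x : ℝ, pPoly m lam q q0 x = 0 → μmin ≤ x) :
    0 ≤ μmin ∧ μmin ≤ min (lam ⟨0, hm⟩) q0 := by
  have hlam' i := (hlam i).le
  have hq' i := (hq i).le
  refine ⟨not_lt.mp fun hneg => pPoly_ne_zero_of_neg hlam' hq' hq0.le hneg hroot, ?_⟩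
  obtain ⟨y, hy, hpy⟩ :=
    exists_pPoly_eq_zero_mem_Icc hlam' hq' hq0.le (i₀ := ⟨0, hm⟩) fun j => hsorted (Nat.zero_le _)
  exact (hsmallest y hpy).trans hy.2
end

section
/- Consequently, Σ_{i=0}^m q_i - μ_min ≤ Σ_{i=0}^m q_i - μ_- = (1/2)·(Σ_{i=0}^m q_i - λ_1 + √((Σ_{i=0}^m q_i + λ_1)² - 4 q_0 λ_1)), with equality if and only if all λ_i are equal to λ_1. -/
/-- The paper's `μ₋`: the smaller root of `(μ - S) (μ - L) - L (S - q₀) = μ² - (L + S) μ + L q₀`. -/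
noncomputable def lowerRoot (L S q0 : ℝ) : ℝ :=
  (1 / 2) * (L + S - √((L + S) ^ 2 - 4 * L * q0))

section LowerRoot

variable {L S q0 : ℝ}

lemma discrim_pos (hL : 0 < L) (hS : q0 < S) : 0 < (L + S) ^ 2 - 4 * L * q0 := by
  nlinarith [sq_nonneg (L - S), mul_pos hL (sub_pos.2 hS)]

lemma lowerRoot_mul_add_sub_lowerRoot (hL : 0 < L) (hS : q0 < S) :
    lowerRoot L S q0 * (L + S - lowerRoot L S q0) = L * q0 := by
  have := Real.sq_sqrt (discrim_pos hL hS).le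
  unfold lowerRoot
  linear_combination (-1 / 4 : ℝ) * this

lemma lowerRoot_le_add_sub_lowerRoot : lowerRoot L S q0 ≤ L + S - lowerRoot L S q0 := by
  unfold lowerRoot
  linarith [Real.sqrt_nonneg ((L + S) ^ 2 - 4 * L * q0)]

lemma lowerRoot_pos (hL : 0 < L) (hq0 : 0 < q0) (hS : q0 < S) : 0 < lowerRoot L S q0 := by
  have hprod := lowerRoot_mul_add_sub_lowerRoot hL hS
  have hle : lowerRoot L S q0 ≤ L + S - lowerRoot L S q0 := lowerRoot_le_add_sub_lowerRoot
  nlinarith [mul_pos hL hq0]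

lemma lowerRoot_lt (hL : 0 < L) (hS : q0 < S) : lowerRoot L S q0 < L := by
  have hs := Real.sq_sqrt (discrim_pos hL hS).le
  have : S - L < √((L + S) ^ 2 - 4 * L * q0) := by
    nlinarith [Real.sqrt_nonneg ((L + S) ^ 2 - 4 * L * q0), mul_pos hL (sub_pos.2 hS)]
  unfold lowerRoot
  linarith

/-- When all `λᵢ` equal `L`, the secular function is this one, whose numerator is the quadratic
defining `lowerRoot`. -/
lemma sub_add_div_mul_eq (hL : 0 < L) (hS : q0 < S) {x : ℝ} (hx : x ≠ L) :
    x - S + (S - q0) * (L / (L - x)) =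
      (x - lowerRoot L S q0) * (x - (L + S - lowerRoot L S q0)) / (x - L) := by
  have hprod := lowerRoot_mul_add_sub_lowerRoot hL hS
  have hxL : x - L ≠ 0 := sub_ne_zero.2 hx
  have hLx : L - x ≠ 0 := sub_ne_zero.2 hx.symm
  field_simp
  linear_combination (x - L) * hprod


lemma sub_add_div_mul_neg (hL : 0 < L) (hS : q0 < S) {x : ℝ} (hx : x < lowerRoot L S q0) :
    x - S + (S - q0) * (L / (L - x)) < 0 := by
  have hxL : x < L := hx.trans (lowerRoot_lt hL hS)
  rw [sub_add_div_mul_eq hL hS hxL.ne]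
  refine div_neg_of_pos_of_neg (mul_pos_of_neg_of_neg ?_ ?_) (sub_neg.2 hxL)
  · linarith
  · linarith [lowerRoot_le_add_sub_lowerRoot (L := L) (S := S) (q0 := q0)]

lemma lowerRoot_sub_add_div_mul (hL : 0 < L) (hS : q0 < S) :
    lowerRoot L S q0 - S + (S - q0) * (L / (L - lowerRoot L S q0)) = 0 := by
  rw [sub_add_div_mul_eq hL hS (lowerRoot_lt hL hS).ne, sub_self, zero_mul, zero_div]

end LowerRoot

lemma div_sub_le_one {b x : ℝ} (hx : x ≤ 0) (hxb : x < b) : b / (b - x) ≤ 1 := by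
  rw [div_le_one (sub_pos.2 hxb)]
  linarith

lemma div_sub_le_div_sub {a b x : ℝ} (hx : 0 ≤ x) (hxa : x < a) (hab : a ≤ b) :
    b / (b - x) ≤ a / (a - x) := by
  rw [div_le_div_iff₀ (by linarith) (by linarith)]
  nlinarith

lemma div_sub_lt_div_sub {a b x : ℝ} (hx : 0 < x) (hxa : x < a) (hab : a < b) :
    b / (b - x) < a / (a - x) := by
  rw [div_lt_div_iff₀ (by linarith) (by linarith)]
  nlinarith

section Secular

variable {ι : Type*} [Fintype ι]

noncomputable def secularSum (lam q : ι → ℝ) (x : ℝ) : ℝ :=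
  ∑ i, q i * (lam i / (lam i - x))

variable {lam q : ι → ℝ} {L x : ℝ}

lemma secularSum_le_sum (hq : ∀ i, 0 ≤ q i) (hx : x ≤ 0) (hxlam : ∀ i, x < lam i) :
    secularSum lam q x ≤ ∑ i, q i :=
  Finset.sum_le_sum fun i _ => mul_le_of_le_one_right (hq i) (div_sub_le_one hx (hxlam i))

lemma secularSum_le (hq : ∀ i, 0 ≤ q i) (hx : 0 ≤ x) (hxL : x < L) (hL : ∀ i, L ≤ lam i) :
    secularSum lam q x ≤ (∑ i, q i) * (L / (L - x)) := by
  rw [Finset.sum_mul]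
  refine Finset.sum_le_sum fun i _ => ?_
  exact mul_le_mul_of_nonneg_left (div_sub_le_div_sub hx hxL (hL i)) (hq i)

lemma secularSum_lt (hq : ∀ i, 0 ≤ q i) (hx : 0 < x) (hxL : x < L) (hL : ∀ i, L ≤ lam i)
    {j : ι} (hqj : 0 < q j) (hj : L < lam j) :
    secularSum lam q x < (∑ i, q i) * (L / (L - x)) := by
  rw [Finset.sum_mul]
  refine Finset.sum_lt_sum (fun i _ => ?_) ⟨j, Finset.mem_univ j, ?_⟩
  · exact mul_le_mul_of_nonneg_left (div_sub_le_div_sub hx.le hxL (hL i)) (hq i)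
  · exact mul_lt_mul_of_pos_left (div_sub_lt_div_sub hx hxL hj) hqj

lemma secularSum_of_forall_eq (h : ∀ i, lam i = L) :
    secularSum lam q x = (∑ i, q i) * (L / (L - x)) := by
  simp only [secularSum, h, Finset.sum_mul]

lemma sub_add_secularSum_neg (hL : 0 < L) (hLlam : ∀ i, L ≤ lam i) {q0 : ℝ} (hq0 : 0 < q0)
    (hq : ∀ i, 0 ≤ q i) (hQ : 0 < ∑ i, q i)
    (hx : x < lowerRoot L (q0 + ∑ i, q i) q0) :
    x - (q0 + ∑ i, q i) + secularSum lam q x < 0 := by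
  have hS : q0 < q0 + ∑ i, q i := lt_add_of_pos_right q0 hQ
  have hxL : x < L := hx.trans (lowerRoot_lt hL hS)
  rcases le_or_gt x 0 with hx0 | hx0
  · have := secularSum_le_sum hq hx0 fun i => hxL.trans_le (hLlam i)
    linarith
  · have := secularSum_le hq hx0.le hxL hLlam
    have hpole := sub_add_div_mul_neg hL hS hx
    rw [add_sub_cancel_left] at hpole
    linarith

lemma lowerRoot_sub_add_secularSum_eq_zero_iff (hL : 0 < L) (hLlam : ∀ i, L ≤ lam i) {q0 : ℝ}
    (hq0 : 0 < q0) (hq : ∀ i, 0 < q i) (hQ : 0 < ∑ i, q i) :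
    lowerRoot L (q0 + ∑ i, q i) q0 - (q0 + ∑ i, q i) +
        secularSum lam q (lowerRoot L (q0 + ∑ i, q i) q0) = 0 ↔ ∀ i, lam i = L := by
  have hS : q0 < q0 + ∑ i, q i := lt_add_of_pos_right q0 hQ
  have hpole := lowerRoot_sub_add_div_mul hL hS
  rw [add_sub_cancel_left] at hpole
  constructor
  · intro hzero
    by_contra! hne
    obtain ⟨j, hj⟩ := hne
    have := secularSum_lt (fun i => (hq i).le) (lowerRoot_pos hL hq0 hS) (lowerRoot_lt hL hS)
      hLlam (hq j) ((hLlam j).lt_of_ne' hj)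
    linarith
  · intro h
    rwa [secularSum_of_forall_eq h]

end Secular

section PPoly

variable {m : ℕ} {lam q : Fin m → ℝ} {q0 L : ℝ}

lemma pPoly_eq_prod_mul {x : ℝ} (hx : ∀ i, x ≠ lam i) :
    pPoly m lam q q0 x = (∏ i, (x - lam i)) * (x - (q0 + ∑ i, q i) + secularSum lam q x) := by
  rw [pPoly, secularSum, mul_add, Finset.mul_sum, sub_eq_add_neg, ← Finset.sum_neg_distrib]
  congr 1
  · ring
  · refine Finset.sum_congr rfl fun i _ => ?_
    have hi : lam i - x ≠ 0 := sub_ne_zero.2 (hx i).symm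
    rw [← Finset.mul_prod_erase Finset.univ (fun j => x - lam j) (Finset.mem_univ i)]
    field_simp
    ring

lemma pPoly_ne_zero_of_lt_lowerRoot (hL : 0 < L) (hLlam : ∀ i, L ≤ lam i) (hq0 : 0 < q0)
    (hq : ∀ i, 0 ≤ q i) (hQ : 0 < ∑ i, q i) {x : ℝ} (hx : x < lowerRoot L (q0 + ∑ i, q i) q0) :
    pPoly m lam q q0 x ≠ 0 := by
  have hxlam : ∀ i, x < lam i := fun i =>
    (hx.trans (lowerRoot_lt hL (lt_add_of_pos_right q0 hQ))).trans_le (hLlam i)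
  rw [pPoly_eq_prod_mul fun i => (hxlam i).ne]
  exact mul_ne_zero (Finset.prod_ne_zero_iff.2 fun i _ => sub_ne_zero.2 (hxlam i).ne)
    (sub_add_secularSum_neg hL hLlam hq0 hq hQ hx).ne

lemma pPoly_lowerRoot_eq_zero_iff (hL : 0 < L) (hLlam : ∀ i, L ≤ lam i) (hq0 : 0 < q0)
    (hq : ∀ i, 0 < q i) (hQ : 0 < ∑ i, q i) :
    pPoly m lam q q0 (lowerRoot L (q0 + ∑ i, q i) q0) = 0 ↔ ∀ i, lam i = L := by
  have hlam : ∀ i, lowerRoot L (q0 + ∑ i, q i) q0 < lam i := fun i =>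
    (lowerRoot_lt hL (lt_add_of_pos_right q0 hQ)).trans_le (hLlam i)
  rw [pPoly_eq_prod_mul fun i => (hlam i).ne, mul_eq_zero,
    or_iff_right (Finset.prod_ne_zero_iff.2 fun i _ => sub_ne_zero.2 (hlam i).ne)]
  exact lowerRoot_sub_add_secularSum_eq_zero_iff hL hLlam hq0 hq hQ

end PPoly

/-- `∑ᵢ qᵢ - μ_min ≤ ∑ᵢ qᵢ - μ₋ = (∑ᵢ qᵢ - λ₁ + √((∑ᵢ qᵢ + λ₁)² - 4 q₀ λ₁))/2`,
with equality iff all `λᵢ = λ₁`. -/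
theorem lr_le_bound (m : ℕ) (hm : 0 < m) (lam q : Fin m → ℝ) (q0 : ℝ)
    (hlam1 : 0 < lam ⟨0, hm⟩) (hsorted : Monotone lam)
    (hq : ∀ i, 0 < q i) (hq0 : 0 < q0)
    (μmin : ℝ) (hroot : pPoly m lam q q0 μmin = 0)
    (hsmallest : ∀ x : ℝ, pPoly m lam q q0 x = 0 → μmin ≤ x)
    (μminus : ℝ)
    (hμminus : μminus = (1 / 2) * (lam ⟨0, hm⟩ + (q0 + ∑ i, q i) -
      Real.sqrt ((lam ⟨0, hm⟩ + (q0 + ∑ i, q i)) ^ 2 - 4 * lam ⟨0, hm⟩ * q0))) :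
    (q0 + ∑ i, q i) - μmin ≤ (q0 + ∑ i, q i) - μminus ∧
    (q0 + ∑ i, q i) - μminus = (1 / 2) * ((q0 + ∑ i, q i) - lam ⟨0, hm⟩ +
      Real.sqrt (((q0 + ∑ i, q i) + lam ⟨0, hm⟩) ^ 2 - 4 * q0 * lam ⟨0, hm⟩)) ∧
    ((q0 + ∑ i, q i) - μmin = (q0 + ∑ i, q i) - μminus ↔
      ∀ i, lam i = lam ⟨0, hm⟩) := by
  have hLlam : ∀ i, lam ⟨0, hm⟩ ≤ lam i := fun i => hsorted (Nat.zero_le i.val)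
  have hQ : 0 < ∑ i, q i := Finset.sum_pos (fun i _ => hq i) ⟨⟨0, hm⟩, Finset.mem_univ _⟩
  have hμ : μminus = lowerRoot (lam ⟨0, hm⟩) (q0 + ∑ i, q i) q0 := hμminus
  have hle : μminus ≤ μmin := not_lt.1 fun h =>
    pPoly_ne_zero_of_lt_lowerRoot hlam1 hLlam hq0 (fun i => (hq i).le) hQ (hμ ▸ h) hroot
  refine ⟨by linarith, ?_, ?_⟩
  · rw [hμminus, show ((q0 + ∑ i, q i) + lam ⟨0, hm⟩) ^ 2 - 4 * q0 * lam ⟨0, hm⟩ =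
      (lam ⟨0, hm⟩ + (q0 + ∑ i, q i)) ^ 2 - 4 * lam ⟨0, hm⟩ * q0 by ring]
    ring
  · rw [sub_right_inj, hμ, ← pPoly_lowerRoot_eq_zero_iff hlam1 hLlam hq0 hq hQ, ← hμ]
    constructor
    · rintro rfl
      exact hroot
    · exact fun h => le_antisymm (hsmallest μminus h) hle
end

section
/- Let λ_1 < λ_2 ≤ ... ≤ λ_m with all λ_i, q_i > 0, and suppose λ_j > λ_1 for some j. Then the smallest root μ_min of p is strictly less than λ_1, and p has exactly one root in the interval [0, λ_1). -/
open Finset Filter Topology Set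

theorem sum_mul_prod_erase_eq_sum_div_mul_prod {ι K : Type*} [Fintype ι] [DecidableEq ι] [Field K]
    (c lam : ι → K) {μ : K} (hμ : ∀ i, μ ≠ lam i) :
    ∑ i, c i * ∏ j ∈ univ.erase i, (μ - lam j) = (∑ i, c i / (μ - lam i)) * ∏ j, (μ - lam j) := by
  rw [sum_mul]
  refine sum_congr rfl fun i _ => ?_
  rw [← mul_prod_erase univ _ (mem_univ i)]
  field_simp [sub_ne_zero.mpr (hμ i)]

theorem existsUnique_zero_of_strictMonoOn_of_tendsto_atTop {f : ℝ → ℝ} {a L : ℝ} (haL : a < L)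
    (hmono : StrictMonoOn f (Ico a L)) (hcont : ContinuousOn f (Ico a L)) (ha : f a ≤ 0)
    (htop : Tendsto f (𝓝[<] L) atTop) :
    ∃! x, x ∈ Ico a L ∧ f x = 0 := by
  obtain ⟨b, hfb, hb⟩ := ((htop.eventually_gt_atTop 0).and (Ioo_mem_nhdsLT haL)).exists
  have hsub : Icc a b ⊆ Ico a L := Icc_subset_Ico_right hb.2
  obtain ⟨x, hx, hfx⟩ := intermediate_value_Icc hb.1.le (hcont.mono hsub) ⟨ha, hfb.le⟩
  exact ⟨x, ⟨hsub hx, hfx⟩, fun y hy => hmono.injOn hy.1 (hsub hx) (hy.2.trans hfx.symm)⟩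

section Secular

variable {ι : Type*} [Fintype ι] (lam q : ι → ℝ) (q0 : ℝ)

noncomputable def secular (μ : ℝ) : ℝ :=
  μ - (q0 + ∑ i, q i) + ∑ i, lam i * q i / (lam i - μ)

theorem secular_zero (hlam : ∀ i, lam i ≠ 0) : secular lam q q0 0 = -q0 := by
  have : ∑ i, lam i * q i / (lam i - 0) = ∑ i, q i :=
    sum_congr rfl fun i _ => by rw [sub_zero, mul_div_cancel_left₀ _ (hlam i)]
  rw [secular, this]
  ring

variable {lam q} {L : ℝ}

theorem continuousOn_secular (hL : ∀ i, L ≤ lam i) : ContinuousOn (secular lam q q0) (Iio L) :=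
  (continuousOn_id.sub continuousOn_const).add <| continuousOn_finsetSum _ fun i _ =>
    continuousOn_const.div (continuousOn_const.sub continuousOn_id)
      fun _ hμ => sub_ne_zero.mpr (lt_of_lt_of_le hμ (hL i)).ne'

theorem strictMonoOn_secular (hc : ∀ i, 0 ≤ lam i * q i) (hL : ∀ i, L ≤ lam i) :
    StrictMonoOn (secular lam q q0) (Iio L) := by
  intro x _ y hy hxy
  have hsum : ∑ i, lam i * q i / (lam i - x) ≤ ∑ i, lam i * q i / (lam i - y) :=
    sum_le_sum fun i _ => div_le_div_of_nonneg_left (hc i)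
      (sub_pos.mpr (lt_of_lt_of_le hy (hL i))) (by linarith)
  simp only [secular]
  linarith

theorem tendsto_secular_atTop {i₀ : ι} (hc : ∀ i, 0 ≤ lam i * q i) (hc₀ : 0 < lam i₀ * q i₀)
    (hL : ∀ i, lam i₀ ≤ lam i) :
    Tendsto (secular lam q q0) (𝓝[<] (lam i₀)) atTop := by
  set L := lam i₀
  have hpole : Tendsto (fun μ => lam i₀ * q i₀ / (L - μ)) (𝓝[<] L) atTop := by
    simp only [div_eq_mul_inv]
    refine Tendsto.const_mul_atTop hc₀ (Tendsto.inv_tendsto_nhdsGT_zero ?_)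
    refine tendsto_nhdsWithin_of_tendsto_nhds_of_eventually_within _ ?_
      (eventually_nhdsWithin_of_forall fun μ hμ => mem_Ioi.mpr (sub_pos.mpr hμ))
    simpa using (tendsto_const_nhds.sub (tendsto_id.mono_left nhdsWithin_le_nhds) :
      Tendsto (fun μ => L - μ) (𝓝[<] L) (𝓝 (L - L)))
  have hbound : ∀ μ ∈ Iio L,
      μ - (q0 + ∑ i, q i) + lam i₀ * q i₀ / (L - μ) ≤ secular lam q q0 μ := by
    intro μ hμ
    have := single_le_sum (f := fun i => lam i * q i / (lam i - μ))
      (fun i _ => div_nonneg (hc i) (sub_pos.mpr (lt_of_lt_of_le hμ (hL i))).le) (mem_univ i₀)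
    simp only [secular]
    linarith
  refine tendsto_atTop_mono' _ (eventually_nhdsWithin_of_forall hbound) ?_
  exact Tendsto.add_atTop ((continuous_id.sub continuous_const).continuousWithinAt) hpole

end Secular

theorem pPoly_eq_secular_mul_prod (m : ℕ) (lam q : Fin m → ℝ) (q0 : ℝ) {μ : ℝ}
    (hμ : ∀ i, μ ≠ lam i) :
    pPoly m lam q q0 μ = secular lam q q0 μ * ∏ i, (μ - lam i) := by
  have hdiv : ∀ i, lam i * q i / (μ - lam i) = -(lam i * q i / (lam i - μ)) := fun i => by
    rw [← neg_sub, div_neg]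
  rw [pPoly, secular, sum_mul_prod_erase_eq_sum_div_mul_prod _ _ hμ]
  simp only [hdiv, sum_neg_distrib]
  ring

theorem pPoly_eq_zero_iff_secular_eq_zero (m : ℕ) (lam q : Fin m → ℝ) (q0 : ℝ) {μ : ℝ}
    (hμ : ∀ i, μ ≠ lam i) :
    pPoly m lam q q0 μ = 0 ↔ secular lam q q0 μ = 0 := by
  rw [pPoly_eq_secular_mul_prod m lam q q0 hμ, mul_eq_zero,
    or_iff_left (prod_ne_zero_iff.mpr fun i _ => sub_ne_zero.mpr (hμ i))]

theorem mu_min_lt_lam1_general (m : ℕ) (hm : 0 < m) (lam q : Fin m → ℝ) (q0 : ℝ)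
    (hlam1 : 0 < lam ⟨0, hm⟩) (hsorted : Monotone lam)
    (hq : ∀ i, 0 < q i) (hq0 : 0 < q0)
    (μmin : ℝ)
    (hsmallest : ∀ x : ℝ, pPoly m lam q q0 x = 0 → μmin ≤ x) :
    μmin < lam ⟨0, hm⟩ ∧
    ∃! μ : ℝ, μ ∈ Set.Ico 0 (lam ⟨0, hm⟩) ∧ pPoly m lam q q0 μ = 0 := by
  set L := lam ⟨0, hm⟩
  have hL : ∀ i, L ≤ lam i := fun i => hsorted (Nat.zero_le i.val)
  have hc : ∀ i, 0 < lam i * q i := fun i => mul_pos (hlam1.trans_le (hL i)) (hq i)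
  have hroots : ∀ μ, μ ∈ Ico 0 L ∧ pPoly m lam q q0 μ = 0 ↔ μ ∈ Ico 0 L ∧ secular lam q q0 μ = 0 :=
    fun μ => and_congr_right fun hμ =>
      pPoly_eq_zero_iff_secular_eq_zero m lam q q0 fun i => (hμ.2.trans_le (hL i)).ne
  have hunique : ∃! μ, μ ∈ Ico 0 L ∧ pPoly m lam q q0 μ = 0 :=
    (existsUnique_congr hroots).mpr <| existsUnique_zero_of_strictMonoOn_of_tendsto_atTop hlam1
      ((strictMonoOn_secular q0 (fun i => (hc i).le) hL).mono Ico_subset_Iio_self)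
      ((continuousOn_secular q0 hL).mono Ico_subset_Iio_self)
      (by rw [secular_zero lam q q0 fun i => (hlam1.trans_le (hL i)).ne']; linarith)
      (tendsto_secular_atTop q0 (fun i => (hc i).le) (hc _) hL)
  obtain ⟨μ₀, hμ₀, hpμ₀⟩ := hunique.exists
  exact ⟨(hsmallest μ₀ hpμ₀).trans_lt hμ₀.2, hunique⟩

/-- If some `λⱼ > λ₁`, the smallest root `μ_min` of `p` is strictly less than `λ₁`, and
`p` has exactly one root in `[0, λ₁)`. -/
theorem mu_min_lt_lam1 (m : ℕ) (hm : 0 < m) (lam q : Fin m → ℝ) (q0 : ℝ)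
    (hlam1 : 0 < lam ⟨0, hm⟩) (hsorted : Monotone lam)
    (hq : ∀ i, 0 < q i) (hq0 : 0 < q0)
    (hstrict : ∃ j, lam ⟨0, hm⟩ < lam j)
    (μmin : ℝ) (hroot : pPoly m lam q q0 μmin = 0)
    (hsmallest : ∀ x : ℝ, pPoly m lam q q0 x = 0 → μmin ≤ x) :
    μmin < lam ⟨0, hm⟩ ∧
    ∃! μ : ℝ, μ ∈ Set.Ico 0 (lam ⟨0, hm⟩) ∧ pPoly m lam q q0 μ = 0 :=
  mu_min_lt_lam1_general m hm lam q q0 hlam1 hsorted hq hq0 μmin hsmallest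
end
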